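/- arXiv:dg-ga/9610005 — 6 statements merged into one kernel-verified Lean document; each statement's English description precedes it below -/
import Mathlib

section
/- Let m ≥ 2 and n be integers, and let d₀, d₁, …, d_{m-2} and r₀, r₁, …, r_{m-2} be integers satisfying the Plücker relations -d_{k-1} + 2 d_k - d_{k+1} - 2 = r_k for 0 ≤ k ≤ m-2 (with the conventions d_{-1} = 0 and d_{m-1} = 0), together with r₀ ≥ n and r_k ≥ 0 for 1 ≤ k ≤ m-2. Then m·d₀ ≥ (m+n)(m-1). -/
/-- The Plücker relations with r₀ ≥ n and r_k ≥ 0 for k ≥ 1 imply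
m·d₀ ≥ (m+n)(m-1).  Here d and r are indexed by ℤ with the conventions
d(-1) = 0 and d(m-1) = 0. -/
theorem plucker_inequality (m n : ℤ) (hm : 2 ≤ m) (d r : ℤ → ℤ)
    (hd0 : d (-1) = 0) (hdm : d (m - 1) = 0)
    (hrel : ∀ k : ℤ, 0 ≤ k → k ≤ m - 2 → -d (k - 1) + 2 * d k - d (k + 1) - 2 = r k)
    (hr0 : r 0 ≥ n) (hr : ∀ k : ℤ, 1 ≤ k → k ≤ m - 2 → r k ≥ 0) :
    m * d 0 ≥ (m + n) * (m - 1) := by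
  have key : ∀ j : ℕ, (j : ℤ) ≤ m - 2 →
      m * d 0 + (m - 2 - (j : ℤ)) * d j - (m - 1 - (j : ℤ)) * d ((j : ℤ) + 1)
        ≥ (m - 1) * n + ((j : ℤ) + 1) * (2 * m - 2 - (j : ℤ)) := by
    intro j
    induction j with
    | zero =>
      intro _
      have h0 := hrel 0 le_rfl (by linarith)
      rw [show (0 : ℤ) - 1 = -1 from by ring, show (0 : ℤ) + 1 = 1 from by ring, hd0] at h0
      push_cast
      have hprod : 0 ≤ (m - 1) * (r 0 - n) :=
        mul_nonneg (by linarith) (by linarith)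
      nlinarith [h0, hprod]
    | succ j ih =>
      intro h
      push_cast at h ⊢
      have hj : (j : ℤ) ≤ m - 2 := by linarith
      have ih' := ih hj
      have hrel' := hrel ((j : ℤ) + 1) (by positivity) (by linarith)
      rw [show ((j : ℤ) + 1) - 1 = (j : ℤ) from by ring] at hrel'
      have hr' := hr ((j : ℤ) + 1) (by linarith) (by linarith)
      have hprod : 0 ≤ (m - 2 - (j : ℤ)) * r ((j : ℤ) + 1) :=
        mul_nonneg (by linarith) (by linarith)
      have hid : (m - 2 - (j : ℤ)) * (-d j + 2 * d ((j : ℤ) + 1) - d (((j : ℤ) + 1) + 1) - 2)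
          = (m - 2 - (j : ℤ)) * r ((j : ℤ) + 1) := by rw [hrel']
      nlinarith [ih', hid, hprod]
  have hj0 : ((m - 2).toNat : ℤ) = m - 2 := Int.toNat_of_nonneg (by linarith)
  have hkey := key (m - 2).toNat (by rw [hj0])
  rw [hj0, show (m - 2) + 1 = m - 1 from by ring, hdm] at hkey
  nlinarith [hkey]
end

section
/- Let m ≥ 2 and n ≥ 2 be integers. If there exist integers d₀,…,d_{m-2}, r₀,…,r_{m-2} satisfying -d_{k-1} + 2d_k - d_{k+1} - 2 = r_k (0 ≤ k ≤ m-2, with d_{-1} = d_{m-1} = 0), r₀ ≥ n, r_k ≥ 0 for k ≥ 1, and d₀ ≤ n - 1, then n ≥ m². -/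
/-!
Writing `r k + 2 = -d (k-1) + 2 d k - d (k+1)`, the first differences of `d` drop by at least
`2` at every step past `k = 0`, so `d` lies below the parabola through `d 0` with slope
`d 1 - d 0 = d 0 - r 0 - 2`. Evaluating at `k = m - 1`, where `d` vanishes, gives the Plücker
inequality `(m - 1) (r 0 + m) ≤ m d 0`; with `r 0 ≥ n` and `d 0 ≤ n - 1` this forces `n ≥ m²`.
-/

section SecondDifference

variable {d : ℤ → ℤ} {N : ℤ}

theorem sub_pred_le_of_secondDiff_le
    (h : ∀ k, 1 ≤ k → k ≤ N → d (k + 1) - d k ≤ d k - d (k - 1) - 2) :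
    ∀ k, 1 ≤ k → k ≤ N + 1 → d k - d (k - 1) ≤ d 1 - d 0 - 2 * (k - 1) := by
  intro k hk
  induction k, hk using Int.leInduction with
  | base => intro _; simp
  | succ k hk ih =>
    intro hkN
    have := h k hk (by omega)
    have := ih (by omega)
    rw [add_sub_cancel_right]
    linarith

theorem le_parabola_of_secondDiff_le
    (h : ∀ k, 1 ≤ k → k ≤ N → d (k + 1) - d k ≤ d k - d (k - 1) - 2) :
    ∀ k, 0 ≤ k → k ≤ N + 1 → d k ≤ d 0 + k * (d 1 - d 0) - k * (k - 1) := by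
  intro k hk
  induction k, hk using Int.leInduction with
  | base => intro _; simp
  | succ k hk ih =>
    intro hkN
    have := sub_pred_le_of_secondDiff_le h (k + 1) (by omega) hkN
    have := ih (by omega)
    rw [add_sub_cancel_right] at *
    linarith

end SecondDifference

theorem plucker_inequality_s3 {m : ℤ} (hm : 2 ≤ m) {d r : ℤ → ℤ}
    (hd_neg_one : d (-1) = 0) (hd_top : d (m - 1) = 0)
    (hrec : ∀ k, 0 ≤ k → k ≤ m - 2 → -d (k - 1) + 2 * d k - d (k + 1) - 2 = r k)
    (hr : ∀ k, 1 ≤ k → k ≤ m - 2 → 0 ≤ r k) :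
    (m - 1) * (r 0 + m) ≤ m * d 0 := by
  have hslope : d 1 - d 0 = d 0 - r 0 - 2 := by
    have := hrec 0 le_rfl (by omega)
    norm_num [hd_neg_one] at this
    linarith
  have hconcave : ∀ k, 1 ≤ k → k ≤ m - 2 → d (k + 1) - d k ≤ d k - d (k - 1) - 2 := by
    intro k hk hkm
    have := hrec k (by omega) hkm
    have := hr k hk hkm
    linarith
  have := le_parabola_of_secondDiff_le hconcave (m - 1) (by omega) (by omega)
  rw [hd_top, hslope] at this
  linarith

theorem plucker_degree_bound_general (m n : ℤ) (hm : 2 ≤ m)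
    (h : ∃ d r : ℤ → ℤ,
      d (-1) = 0 ∧ d (m - 1) = 0 ∧
      (∀ k : ℤ, 0 ≤ k → k ≤ m - 2 → -d (k - 1) + 2 * d k - d (k + 1) - 2 = r k) ∧
      r 0 ≥ n ∧ (∀ k : ℤ, 1 ≤ k → k ≤ m - 2 → r k ≥ 0) ∧
      d 0 ≤ n - 1) :
    n ≥ m ^ 2 := by
  obtain ⟨d, r, hd_neg_one, hd_top, hrec, hr0, hr, hd0⟩ := h
  have hplucker := plucker_inequality_s3 hm hd_neg_one hd_top hrec hr
  have hr0_mul : (m - 1) * (n + m) ≤ (m - 1) * (r 0 + m) :=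
    mul_le_mul_of_nonneg_left (by linarith) (by linarith)
  have hd0_mul : m * d 0 ≤ m * (n - 1) := mul_le_mul_of_nonneg_left hd0 (by linarith)
  linarith

/-- Combining the Plücker-formula inequality with the degree bound d₀ ≤ n - 1
yields n ≥ m². -/
theorem plucker_degree_bound (m n : ℤ) (hm : 2 ≤ m) (hn : 2 ≤ n)
    (h : ∃ d r : ℤ → ℤ,
      d (-1) = 0 ∧ d (m - 1) = 0 ∧
      (∀ k : ℤ, 0 ≤ k → k ≤ m - 2 → -d (k - 1) + 2 * d k - d (k + 1) - 2 = r k) ∧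
      r 0 ≥ n ∧ (∀ k : ℤ, 1 ≤ k → k ≤ m - 2 → r k ≥ 0) ∧
      d 0 ≤ n - 1) :
    n ≥ m ^ 2 :=
  plucker_degree_bound_general m n hm h
end

section
/- Let a ∈ ℂ with a ≠ 0 and a² ≠ 1. The pfaffian of the 4×4 skew-symmetric matrix Ω with entries Ω₁₂ = 1/(1/a - a), Ω₁₃ = -1/a, Ω₁₄ = -1, Ω₂₃ = -a, Ω₂₄ = -1, Ω₃₄ = -1 (and Ω_{ji} = -Ω_{ij}, Ω_{ii} = 0) equals (a⁴ - a² + 1)/(a(a² - 1)). In particular, the pfaffian vanishes if and only if a⁴ - a² + 1 = 0. -/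
theorem pfaffian_four_ends_eq_div {K : Type*} [Field K] {a : K} (ha : a ≠ 0)
    (ha2 : a ^ 2 ≠ 1) :
    (1 / (1 / a - a)) * (-1) - (-1 / a) * (-1) + (-1) * (-a)
      = (a ^ 4 - a ^ 2 + 1) / (a * (a ^ 2 - 1)) := by
  have hden : 1 - a ^ 2 ≠ 0 := sub_ne_zero.mpr ha2.symm
  rw [div_sub' ha, one_div_div]
  field_simp
  ring

/-- The pfaffian Ω₁₂Ω₃₄ - Ω₁₃Ω₂₄ + Ω₁₄Ω₂₃ of the skew form on the sphere with
four ends {a, 1/a, 0, ∞} equals (a⁴ - a² + 1)/(a(a² - 1)), and it vanishes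
iff a⁴ - a² + 1 = 0. -/
theorem pfaffian_four_ends (a : ℂ) (ha : a ≠ 0) (ha2 : a ^ 2 ≠ 1) :
    (1 / (1 / a - a)) * (-1) - (-1 / a) * (-1) + (-1) * (-a)
      = (a ^ 4 - a ^ 2 + 1) / (a * (a ^ 2 - 1)) ∧
    ((1 / (1 / a - a)) * (-1) - (-1 / a) * (-1) + (-1) * (-a) = 0 ↔
      a ^ 4 - a ^ 2 + 1 = 0) := by
  have hpf := pfaffian_four_ends_eq_div ha ha2
  refine ⟨hpf, ?_⟩
  rw [hpf, div_eq_zero_iff, or_iff_left (mul_ne_zero ha (sub_ne_zero.mpr ha2))]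
end

section
/- Let a = (√3 + i)/2 ∈ ℂ. The 4×4 skew-symmetric complex matrix Ω with entries Ω₁₂ = 1/(1/a - a), Ω₁₃ = -1/a, Ω₁₄ = -1, Ω₂₃ = -a, Ω₂₄ = -1, Ω₃₄ = -1 (and Ω_{ji} = -Ω_{ij}, Ω_{ii} = 0) has rank exactly 2; equivalently, its kernel is 2-dimensional. -/
/-- The skew form Ω on the sphere with ends {a, 1/a, 0, ∞}, a = (√3 + i)/2,
has rank 2; equivalently its kernel is 2-dimensional. -/
theorem rank_two_four_ends :
    let a : ℂ := ((Real.sqrt 3 : ℂ) + Complex.I) / 2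
    let Ω : Matrix (Fin 4) (Fin 4) ℂ :=
      !![0, 1 / (1 / a - a), -1 / a, -1;
         -(1 / (1 / a - a)), 0, -a, -1;
         1 / a, a, 0, -1;
         1, 1, 1, 0]
    Ω.rank = 2 ∧ Module.finrank ℂ (LinearMap.ker Ω.mulVecLin) = 2 := by
  intro a Ω
  set s : ℂ := (Real.sqrt 3 : ℂ) with hsdef
  have hs : s ^ 2 = 3 := by
    rw [hsdef, ← Complex.ofReal_pow]
    norm_num [Real.sq_sqrt]
  have ha : a = (s + Complex.I) / 2 := rfl
  have hmul : a * ((s - Complex.I) / 2) = 1 := by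
    rw [ha]
    field_simp
    linear_combination hs - Complex.I_sq
  have ha0 : a ≠ 0 := by
    intro h; rw [h, zero_mul] at hmul; exact one_ne_zero hmul.symm
  have hinv : 1 / a = (s - Complex.I) / 2 := by
    rw [div_eq_iff ha0]
    linear_combination (hs - Complex.I_sq) * (-1/4 : ℂ)
  have hden : 1 / a - a = -Complex.I := by rw [hinv, ha]; ring
  have hIi : 1 / (1 / a - a) = Complex.I := by
    rw [hden, one_div, inv_neg, Complex.inv_I, neg_neg]
  have h2 : (-1 : ℂ) / a = -((s - Complex.I) / 2) := by rw [neg_div, hinv]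
  set M : Matrix (Fin 4) (Fin 4) ℂ :=
    !![0, Complex.I, -((s - Complex.I) / 2), -1;
       -Complex.I, 0, -((s + Complex.I) / 2), -1;
       (s - Complex.I) / 2, (s + Complex.I) / 2, 0, -1;
       1, 1, 1, 0] with hM
  have hΩ : Ω = M := by
    show (!![0, 1 / (1 / a - a), -1 / a, -1;
         -(1 / (1 / a - a)), 0, -a, -1;
         1 / a, a, 0, -1;
         1, 1, 1, 0] : Matrix (Fin 4) (Fin 4) ℂ) = M
    rw [hIi, h2, hinv, ha, hM]
  set B : Matrix (Fin 4) (Fin 2) ℂ :=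
    !![1, -((s - Complex.I) / 2); 1, -((s + Complex.I) / 2); 1, 0; 0, 1] with hB
  set C : Matrix (Fin 2) (Fin 4) ℂ :=
    !![(s - Complex.I) / 2, (s + Complex.I) / 2, 0, -1; 1, 1, 1, 0] with hC
  have hfac : M = B * C := by
    ext i j
    fin_cases i <;> fin_cases j <;>
      simp [hM, hB, hC, Matrix.mul_apply, Fin.sum_univ_succ] <;> ring
  have hub : M.rank ≤ 2 := by
    rw [hfac]
    exact (Matrix.rank_mul_le_left B C).trans (by simpa using B.rank_le_card_width)
  -- lower bound
  have hcol2 : M.mulVec (![(0:ℂ),0,1,0]) = ![-((s - Complex.I) / 2), -((s + Complex.I) / 2), 0, 1] := by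
    funext i
    fin_cases i <;> simp [hM, Matrix.mulVec, dotProduct, Fin.sum_univ_succ]
  have hcol3 : M.mulVec (![(0:ℂ),0,0,1]) = ![-1, -1, -1, 0] := by
    funext i
    fin_cases i <;> simp [hM, Matrix.mulVec, dotProduct, Fin.sum_univ_succ]
  have hli : LinearIndependent ℂ
      ![M.mulVec (![(0:ℂ),0,1,0]), M.mulVec (![(0:ℂ),0,0,1])] := by
    rw [hcol2, hcol3, LinearIndependent.pair_iff]
    intro p q hpq
    have h3 := congrFun hpq 3
    have h2' := congrFun hpq 2
    simp at h3 h2'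
    exact ⟨h3, by simpa [h3] using h2'⟩
  have hlb : 2 ≤ M.rank := by
    have hspan : Submodule.span ℂ (Set.range ![M.mulVec (![(0:ℂ),0,1,0]), M.mulVec (![(0:ℂ),0,0,1])])
        ≤ LinearMap.range M.mulVecLin := by
      rw [Submodule.span_le]
      rintro x ⟨i, rfl⟩
      fin_cases i <;> exact ⟨_, rfl⟩
    calc (2 : ℕ) = Module.finrank ℂ (Submodule.span ℂ
          (Set.range ![M.mulVec (![(0:ℂ),0,1,0]), M.mulVec (![(0:ℂ),0,0,1])])) := by
          rw [finrank_span_eq_card hli]; simp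
      _ ≤ Module.finrank ℂ (LinearMap.range M.mulVecLin) := Submodule.finrank_mono hspan
      _ = M.rank := rfl
  have hrank : M.rank = 2 := le_antisymm hub hlb
  have hrn := LinearMap.finrank_range_add_finrank_ker M.mulVecLin
  rw [hΩ]
  refine ⟨hrank, ?_⟩
  have : Module.finrank ℂ (Fin 4 → ℂ) = 4 := by simp
  have hr2 : Module.finrank ℂ (LinearMap.range M.mulVecLin) = 2 := hrank
  omega
end

section
/- Let a₁, a₂, a₃, a₄ be distinct nonzero complex numbers with a₁a₂a₃a₄ = 1, all distinct from each other. Let σ₁ = a₁+a₂+a₃+a₄, σ₂ = -(a₁a₂ + a₁a₃ + a₁a₄ + a₂a₃ + a₂a₄ + a₃a₄), σ₃ = a₁a₂a₃ + a₁a₂a₄ + a₁a₃a₄ + a₂a₃a₄, and set τ₁ = σ₁² + 3σ₂, τ₃ = σ₃² + 3σ₂. Consider the 6×6 skew-symmetric matrix Ω with Ω_{ij} = 1/(a_j - a_i) for 1 ≤ i ≠ j ≤ 5 (where a₅ = 0), Ω_{i6} = -1 for 1 ≤ i ≤ 5, and Ω_{ji} = -Ω_{ij}. Then the pfaffian of Ω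 vanishes if and only if τ₁τ₃ + σ₁σ₃ - 20 = 0. -/
/-- The pfaffian of a 6×6 skew-symmetric matrix (sum over perfect matchings). -/
def pf6 (A : Matrix (Fin 6) (Fin 6) ℂ) : ℂ :=
    A 0 1 * A 2 3 * A 4 5 - A 0 1 * A 2 4 * A 3 5 + A 0 1 * A 2 5 * A 3 4
  - A 0 2 * A 1 3 * A 4 5 + A 0 2 * A 1 4 * A 3 5 - A 0 2 * A 1 5 * A 3 4
  + A 0 3 * A 1 2 * A 4 5 - A 0 3 * A 1 4 * A 2 5 + A 0 3 * A 1 5 * A 2 4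
  - A 0 4 * A 1 2 * A 3 5 + A 0 4 * A 1 3 * A 2 5 - A 0 4 * A 1 5 * A 2 3
  + A 0 5 * A 1 2 * A 3 4 - A 0 5 * A 1 3 * A 2 4 + A 0 5 * A 1 4 * A 2 3

set_option maxHeartbeats 1000000 in
set_option maxRecDepth 8000 in
/-- For six ends {a₁, a₂, a₃, a₄, 0, ∞} with a₁a₂a₃a₄ = 1, the pfaffian of the
skew form Ω vanishes iff τ₁τ₃ + σ₁σ₃ - 20 = 0. -/
theorem pfaffian_six_ends (a₁ a₂ a₃ a₄ : ℂ)
    (h0 : a₁ ≠ 0) (h0' : a₂ ≠ 0) (h0'' : a₃ ≠ 0) (h0''' : a₄ ≠ 0)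
    (h12 : a₁ ≠ a₂) (h13 : a₁ ≠ a₃) (h14 : a₁ ≠ a₄)
    (h23 : a₂ ≠ a₃) (h24 : a₂ ≠ a₄) (h34 : a₃ ≠ a₄)
    (hprod : a₁ * a₂ * a₃ * a₄ = 1) :
    let σ₁ := a₁ + a₂ + a₃ + a₄
    let σ₂ := -(a₁ * a₂ + a₁ * a₃ + a₁ * a₄ + a₂ * a₃ + a₂ * a₄ + a₃ * a₄)
    let σ₃ := a₁ * a₂ * a₃ + a₁ * a₂ * a₄ + a₁ * a₃ * a₄ + a₂ * a₃ * a₄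
    let τ₁ := σ₁ ^ 2 + 3 * σ₂
    let τ₃ := σ₃ ^ 2 + 3 * σ₂
    let Ω : Matrix (Fin 6) (Fin 6) ℂ :=
      !![0, 1/(a₂-a₁), 1/(a₃-a₁), 1/(a₄-a₁), 1/(0-a₁), -1;
         1/(a₁-a₂), 0, 1/(a₃-a₂), 1/(a₄-a₂), 1/(0-a₂), -1;
         1/(a₁-a₃), 1/(a₂-a₃), 0, 1/(a₄-a₃), 1/(0-a₃), -1;
         1/(a₁-a₄), 1/(a₂-a₄), 1/(a₃-a₄), 0, 1/(0-a₄), -1;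
         1/(a₁-0), 1/(a₂-0), 1/(a₃-0), 1/(a₄-0), 0, -1;
         1, 1, 1, 1, 1, 0]
    (pf6 Ω = 0 ↔ τ₁ * τ₃ + σ₁ * σ₃ - 20 = 0) := by
  intro σ₁ σ₂ σ₃ τ₁ τ₃ Ω
  have d12 : a₂ - a₁ ≠ 0 := sub_ne_zero.mpr h12.symm
  have d13 : a₃ - a₁ ≠ 0 := sub_ne_zero.mpr h13.symm
  have d14 : a₄ - a₁ ≠ 0 := sub_ne_zero.mpr h14.symm
  have d23 : a₃ - a₂ ≠ 0 := sub_ne_zero.mpr h23.symm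
  have d24 : a₄ - a₂ ≠ 0 := sub_ne_zero.mpr h24.symm
  have d34 : a₄ - a₃ ≠ 0 := sub_ne_zero.mpr h34.symm
  have hVne : (a₂ - a₁) * (a₃ - a₁) * (a₄ - a₁) * (a₃ - a₂) * (a₄ - a₂) * (a₄ - a₃) ≠ 0 :=
    mul_ne_zero (mul_ne_zero (mul_ne_zero (mul_ne_zero (mul_ne_zero d12 d13) d14) d23) d24) d34
  have t0 : -((1/(a₂ - a₁)) * (1/(a₄ - a₃))) * ((a₂ - a₁) * (a₃ - a₁) * (a₄ - a₁) * (a₃ - a₂) * (a₄ - a₂) * (a₄ - a₃) * (a₁ * a₂ * a₃ * a₄)) = -((a₃ - a₁) * (a₄ - a₁) * (a₃ - a₂) * (a₄ - a₂) * a₁ * a₂ * a₃ * a₄) := by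
    field_simp
  have t1 : ((1/(a₂ - a₁)) * (1/(0 - a₃))) * ((a₂ - a₁) * (a₃ - a₁) * (a₄ - a₁) * (a₃ - a₂) * (a₄ - a₂) * (a₄ - a₃) * (a₁ * a₂ * a₃ * a₄)) = -((a₃ - a₁) * (a₄ - a₁) * (a₃ - a₂) * (a₄ - a₂) * (a₄ - a₃) * a₁ * a₂ * a₄) := by
    field_simp
    ring
  have t2 : -((1/(a₂ - a₁)) * (1/(0 - a₄))) * ((a₂ - a₁) * (a₃ - a₁) * (a₄ - a₁) * (a₃ - a₂) * (a₄ - a₂) * (a₄ - a₃) * (a₁ * a₂ * a₃ * a₄)) = ((a₃ - a₁) * (a₄ - a₁) * (a₃ - a₂) * (a₄ - a₂) * (a₄ - a₃) * a₁ * a₂ * a₃) := by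
    field_simp
    ring
  have t3 : ((1/(a₃ - a₁)) * (1/(a₄ - a₂))) * ((a₂ - a₁) * (a₃ - a₁) * (a₄ - a₁) * (a₃ - a₂) * (a₄ - a₂) * (a₄ - a₃) * (a₁ * a₂ * a₃ * a₄)) = ((a₂ - a₁) * (a₄ - a₁) * (a₃ - a₂) * (a₄ - a₃) * (a₁ * a₂ * a₃ * a₄)) := by
    field_simp
  have t4 : -((1/(a₃ - a₁)) * (1/(0 - a₂))) * ((a₂ - a₁) * (a₃ - a₁) * (a₄ - a₁) * (a₃ - a₂) * (a₄ - a₂) * (a₄ - a₃) * (a₁ * a₂ * a₃ * a₄)) = ((a₂ - a₁) * (a₄ - a₁) * (a₃ - a₂) * (a₄ - a₂) * (a₄ - a₃) * a₁ * a₃ * a₄) := by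
    field_simp
    ring
  have t5 : ((1/(a₃ - a₁)) * (1/(0 - a₄))) * ((a₂ - a₁) * (a₃ - a₁) * (a₄ - a₁) * (a₃ - a₂) * (a₄ - a₂) * (a₄ - a₃) * (a₁ * a₂ * a₃ * a₄)) = -((a₂ - a₁) * (a₄ - a₁) * (a₃ - a₂) * (a₄ - a₂) * (a₄ - a₃) * a₁ * a₂ * a₃) := by
    field_simp
    ring
  have t6 : -((1/(a₄ - a₁)) * (1/(a₃ - a₂))) * ((a₂ - a₁) * (a₃ - a₁) * (a₄ - a₁) * (a₃ - a₂) * (a₄ - a₂) * (a₄ - a₃) * (a₁ * a₂ * a₃ * a₄)) = -((a₂ - a₁) * (a₃ - a₁) * (a₄ - a₂) * (a₄ - a₃) * (a₁ * a₂ * a₃ * a₄)) := by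
    field_simp
  have t7 : ((1/(a₄ - a₁)) * (1/(0 - a₂))) * ((a₂ - a₁) * (a₃ - a₁) * (a₄ - a₁) * (a₃ - a₂) * (a₄ - a₂) * (a₄ - a₃) * (a₁ * a₂ * a₃ * a₄)) = -((a₂ - a₁) * (a₃ - a₁) * (a₃ - a₂) * (a₄ - a₂) * (a₄ - a₃) * a₁ * a₃ * a₄) := by
    field_simp
    ring
  have t8 : -((1/(a₄ - a₁)) * (1/(0 - a₃))) * ((a₂ - a₁) * (a₃ - a₁) * (a₄ - a₁) * (a₃ - a₂) * (a₄ - a₂) * (a₄ - a₃) * (a₁ * a₂ * a₃ * a₄)) = ((a₂ - a₁) * (a₃ - a₁) * (a₃ - a₂) * (a₄ - a₂) * (a₄ - a₃) * a₁ * a₂ * a₄) := by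
    field_simp
    ring
  have t9 : ((1/(0 - a₁)) * (1/(a₃ - a₂))) * ((a₂ - a₁) * (a₃ - a₁) * (a₄ - a₁) * (a₃ - a₂) * (a₄ - a₂) * (a₄ - a₃) * (a₁ * a₂ * a₃ * a₄)) = -((a₂ - a₁) * (a₃ - a₁) * (a₄ - a₁) * (a₄ - a₂) * (a₄ - a₃) * a₂ * a₃ * a₄) := by
    field_simp
    ring
  have t10 : -((1/(0 - a₁)) * (1/(a₄ - a₂))) * ((a₂ - a₁) * (a₃ - a₁) * (a₄ - a₁) * (a₃ - a₂) * (a₄ - a₂) * (a₄ - a₃) * (a₁ * a₂ * a₃ * a₄)) = ((a₂ - a₁) * (a₃ - a₁) * (a₄ - a₁) * (a₃ - a₂) * (a₄ - a₃) * a₂ * a₃ * a₄) := by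
    field_simp
    ring
  have t11 : ((1/(0 - a₁)) * (1/(a₄ - a₃))) * ((a₂ - a₁) * (a₃ - a₁) * (a₄ - a₁) * (a₃ - a₂) * (a₄ - a₂) * (a₄ - a₃) * (a₁ * a₂ * a₃ * a₄)) = -((a₂ - a₁) * (a₃ - a₁) * (a₄ - a₁) * (a₃ - a₂) * (a₄ - a₂) * a₂ * a₃ * a₄) := by
    field_simp
    ring
  have t12 : -((1/(a₃ - a₂)) * (1/(0 - a₄))) * ((a₂ - a₁) * (a₃ - a₁) * (a₄ - a₁) * (a₃ - a₂) * (a₄ - a₂) * (a₄ - a₃) * (a₁ * a₂ * a₃ * a₄)) = ((a₂ - a₁) * (a₃ - a₁) * (a₄ - a₁) * (a₄ - a₂) * (a₄ - a₃) * a₁ * a₂ * a₃) := by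
    field_simp
    ring
  have t13 : ((1/(a₄ - a₂)) * (1/(0 - a₃))) * ((a₂ - a₁) * (a₃ - a₁) * (a₄ - a₁) * (a₃ - a₂) * (a₄ - a₂) * (a₄ - a₃) * (a₁ * a₂ * a₃ * a₄)) = -((a₂ - a₁) * (a₃ - a₁) * (a₄ - a₁) * (a₃ - a₂) * (a₄ - a₃) * a₁ * a₂ * a₄) := by
    field_simp
    ring
  have t14 : -((1/(0 - a₂)) * (1/(a₄ - a₃))) * ((a₂ - a₁) * (a₃ - a₁) * (a₄ - a₁) * (a₃ - a₂) * (a₄ - a₂) * (a₄ - a₃) * (a₁ * a₂ * a₃ * a₄)) = ((a₂ - a₁) * (a₃ - a₁) * (a₄ - a₁) * (a₃ - a₂) * (a₄ - a₂) * a₁ * a₃ * a₄) := by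
    field_simp
    ring
  have hpf : pf6 Ω = (1/(a₂ - a₁)) * (1/(a₄ - a₃)) * (-1) - (1/(a₂ - a₁)) * (1/(0 - a₃)) * (-1) + (1/(a₂ - a₁)) * (-1) * (1/(0 - a₄)) - (1/(a₃ - a₁)) * (1/(a₄ - a₂)) * (-1) + (1/(a₃ - a₁)) * (1/(0 - a₂)) * (-1) - (1/(a₃ - a₁)) * (-1) * (1/(0 - a₄)) + (1/(a₄ - a₁)) * (1/(a₃ - a₂)) * (-1) - (1/(a₄ - a₁)) * (1/(0 - a₂)) * (-1) + (1/(a₄ - a₁)) * (-1) * (1/(0 - a₃)) - (1/(0 - a₁)) * (1/(a₃ - a₂)) * (-1) + (1/(0 - a₁)) * (1/(a₄ - a₂)) * (-1) - (1/(0 - a₁)) * (-1) * (1/(a₄ - a₃)) + (-1) * (1/(a₃ - a₂)) * (1/(0 - a₄)) - (-1) * (1/(a₄ - a₂)) * (1/(0 - a₃)) + (-1) * (1/(0 - a₂)) * (1/(a₄ - a₃)) := by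
    rfl
  have key : pf6 Ω * ((a₂ - a₁) * (a₃ - a₁) * (a₄ - a₁) * (a₃ - a₂) * (a₄ - a₂) * (a₄ - a₃) * (a₁ * a₂ * a₃ * a₄)) = (-((a₃ - a₁) * (a₄ - a₁) * (a₃ - a₂) * (a₄ - a₂) * a₁ * a₂ * a₃ * a₄)) + (-((a₃ - a₁) * (a₄ - a₁) * (a₃ - a₂) * (a₄ - a₂) * (a₄ - a₃) * a₁ * a₂ * a₄)) + (((a₃ - a₁) * (a₄ - a₁) * (a₃ - a₂) * (a₄ - a₂) * (a₄ - a₃) * a₁ * a₂ * a₃)) + (((a₂ - a₁) * (a₄ - a₁) * (a₃ - a₂) * (a₄ - a₃) * a₁ * a₂ * a₃ * a₄)) + (((a₂ - a₁) * (a₄ - a₁) * (a₃ - a₂) * (a₄ - a₂) * (a₄ - a₃) * a₁ * a₃ * a₄)) + (-((a₂ - a₁) * (a₄ - a₁) * (a₃ - a₂) * (a₄ - a₂) * (a₄ - a₃) * a₁ * a₂ * a₃)) + (-((a₂ - a₁) * (a₃ - a₁) * (a₄ - a₂) * (a₄ - a₃) * a₁ * a₂ * a₃ * a₄)) + (-((a₂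 - a₁) * (a₃ - a₁) * (a₃ - a₂) * (a₄ - a₂) * (a₄ - a₃) * a₁ * a₃ * a₄)) + (((a₂ - a₁) * (a₃ - a₁) * (a₃ - a₂) * (a₄ - a₂) * (a₄ - a₃) * a₁ * a₂ * a₄)) + (-((a₂ - a₁) * (a₃ - a₁) * (a₄ - a₁) * (a₄ - a₂) * (a₄ - a₃) * a₂ * a₃ * a₄)) + (((a₂ - a₁) * (a₃ - a₁) * (a₄ - a₁) * (a₃ - a₂) * (a₄ - a₃) * a₂ * a₃ * a₄)) + (-((a₂ - a₁) * (a₃ - a₁) * (a₄ - a₁) * (a₃ - a₂) * (a₄ - a₂) * a₂ * a₃ * a₄)) + (((a₂ - a₁) * (a₃ - a₁) * (a₄ - a₁) * (a₄ - a₂) * (a₄ - a₃) * a₁ * a₂ * a₃)) + (-((a₂ - a₁) * (a₃ - a₁) * (a₄ - a₁) * (a₃ - a₂) * (a₄ - a₃) * a₁ * a₂ * a₄)) + (((a₂ - a₁) * (a₃ - a₁) * (a₄ - a₁) * (a₃ - a₂) * (a₄ - a₂) * a₁ * a₃ * a₄)) := by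
    rw [hpf]
    linear_combination t0 + t1 + t2 + t3 + t4 + t5 + t6 + t7 + t8 + t9 + t10 + t11 + t12 + t13 + t14
  have key2 : ((-((a₃ - a₁) * (a₄ - a₁) * (a₃ - a₂) * (a₄ - a₂) * a₁ * a₂ * a₃ * a₄)) + (-((a₃ - a₁) * (a₄ - a₁) * (a₃ - a₂) * (a₄ - a₂) * (a₄ - a₃) * a₁ * a₂ * a₄)) + (((a₃ - a₁) * (a₄ - a₁) * (a₃ - a₂) * (a₄ - a₂) * (a₄ - a₃) * a₁ * a₂ * a₃)) + (((a₂ - a₁) * (a₄ - a₁) * (a₃ - a₂) * (a₄ - a₃) * a₁ * a₂ * a₃ * a₄)) + (((a₂ - a₁) * (a₄ - a₁) * (a₃ - a₂) * (a₄ - a₂) * (a₄ - a₃) * a₁ * a₃ * a₄)) + (-((a₂ - a₁) * (a₄ - a₁) * (a₃ - a₂) * (a₄ - a₂) * (a₄ - a₃) * a₁ * a₂ * a₃)) + (-((a₂ - a₁) * (a₃ - a₁) * (a₄ - a₂) * (a₄ - a₃) * a₁ * a₂ * a₃ * a₄)) + (-((a₂ - a₁) * (a₃ - a₁) * (a₃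 - a₂) * (a₄ - a₂) * (a₄ - a₃) * a₁ * a₃ * a₄)) + (((a₂ - a₁) * (a₃ - a₁) * (a₃ - a₂) * (a₄ - a₂) * (a₄ - a₃) * a₁ * a₂ * a₄)) + (-((a₂ - a₁) * (a₃ - a₁) * (a₄ - a₁) * (a₄ - a₂) * (a₄ - a₃) * a₂ * a₃ * a₄)) + (((a₂ - a₁) * (a₃ - a₁) * (a₄ - a₁) * (a₃ - a₂) * (a₄ - a₃) * a₂ * a₃ * a₄)) + (-((a₂ - a₁) * (a₃ - a₁) * (a₄ - a₁) * (a₃ - a₂) * (a₄ - a₂) * a₂ * a₃ * a₄)) + (((a₂ - a₁) * (a₃ - a₁) * (a₄ - a₁) * (a₄ - a₂) * (a₄ - a₃) * a₁ * a₂ * a₃)) + (-((a₂ - a₁) * (a₃ - a₁) * (a₄ - a₁) * (a₃ - a₂) * (a₄ - a₃) * a₁ * a₂ * a₄)) + (((a₂ - a₁) * (a₃ - a₁) * (a₄ - a₁) * (a₃ - a₂) * (a₄ - a₂) * a₁ * a₃ * a₄)) : ℂ) = -(τ₁ * τ₃ + σ₁ * σ₃ - 20) + ((20:ℂ) + (3:ℂ)*a₃^1*a₄^3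 + (-3:ℂ)*a₃^2*a₄^2 + (3:ℂ)*a₃^3*a₄^1 + (3:ℂ)*a₂^1*a₄^3 + (-4:ℂ)*a₂^1*a₃^1*a₄^2 + (-4:ℂ)*a₂^1*a₃^2*a₄^1 + (3:ℂ)*a₂^1*a₃^3 + (-3:ℂ)*a₂^2*a₄^2 + (-4:ℂ)*a₂^2*a₃^1*a₄^1 + (-3:ℂ)*a₂^2*a₃^2 + (3:ℂ)*a₂^3*a₄^1 + (3:ℂ)*a₂^3*a₃^1 + (3:ℂ)*a₁^1*a₄^3 + (-4:ℂ)*a₁^1*a₃^1*a₄^2 + (-4:ℂ)*a₁^1*a₃^2*a₄^1 + (3:ℂ)*a₁^1*a₃^3 + (-4:ℂ)*a₁^1*a₂^1*a₄^2 + (-2:ℂ)*a₁^1*a₂^1*a₃^1*a₄^1 + (-4:ℂ)*a₁^1*a₂^1*a₃^2 + (-4:ℂ)*a₁^1*a₂^2*a₄^1 + (-4:ℂ)*a₁^1*a₂^2*a₃^1 + (3:ℂ)*a₁^1*a₂^3 + (-3:ℂ)*a₁^2*a₄^2 + (-4:ℂ)*a₁^2*a₃^1*a₄^1 + (-3:ℂ)*a₁^2*a₃^2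 + (-4:ℂ)*a₁^2*a₂^1*a₄^1 + (-4:ℂ)*a₁^2*a₂^1*a₃^1 + (-3:ℂ)*a₁^2*a₂^2 + (3:ℂ)*a₁^3*a₄^1 + (3:ℂ)*a₁^3*a₃^1 + (3:ℂ)*a₁^3*a₂^1) * (a₁ * a₂ * a₃ * a₄ - 1) := by
    simp only [τ₁, τ₃, σ₁, σ₂, σ₃]
    ring
  rw [key2] at key
  rw [hprod, mul_one, sub_self, mul_zero, add_zero] at key
  constructor
  · intro h
    rw [h, zero_mul] at key
    exact neg_eq_zero.mp key.symm
  · intro h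
    rw [h, neg_zero] at key
    rcases mul_eq_zero.mp key with h' | h'
    · exact h'
    · exact absurd h' hVne
end

section
/- Let r, r' ∈ ℂ with r ∉ {0, 1, -1} and (r')² = 4r³ - 4r. Set c₁ = (2(r²-1)², (r²+1)(r²-3), (r²+1)(3r²-1), -2(r²-1)²) and c₂ = ((r²+1)(3r²-1), -2(r²-1)², 2(r²-1)², (r²+1)(r²-3)), with ℘-values (p₁, p₂, p₃, p₄) = (r, -1/r, -r, 1/r) and ℘'-values (r', r'/r², -i r', -i r'/r²). Define C_γ = -2 c₁^γ c₂^γ p_γ / (p_γ')² and C = C₁ + C₂ + C₃ + C₄. Then C = -2(r⁴ - 1)². -/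
/-!
The four points `(p_γ, p'_γ)` are the images of `(r, r')` under the symmetries
`(x, y) ↦ (-x, -i y)` and `(x, y) ↦ (-1/x, y/x²)` of the curve `y² = 4x³ - 4x`, so each of them
lies on the curve. Substituting `p'_γ² = 4 p_γ (p_γ² - 1)` turns `C_γ` into
`-c₁^γ c₂^γ / (2 (p_γ² - 1))`, a rational function of `r`, and the sum is then a rational identity.
-/

open Complex

def OnSquareTorusCurve (x y : ℂ) : Prop := y ^ 2 = 4 * x ^ 3 - 4 * x

namespace OnSquareTorusCurve

variable {x y : ℂ}

theorem neg (hy : OnSquareTorusCurve x y) : OnSquareTorusCurve (-x) (-I * y) := by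
  unfold OnSquareTorusCurve at *
  linear_combination (-1) * hy + y ^ 2 * I_sq

theorem neg_inv (hy : OnSquareTorusCurve x y) (hx : x ≠ 0) :
    OnSquareTorusCurve (-1 / x) (y / x ^ 2) := by
  unfold OnSquareTorusCurve at *
  rw [div_pow, hy]
  field_simp
  ring

theorem inv (hy : OnSquareTorusCurve x y) (hx : x ≠ 0) :
    OnSquareTorusCurve (1 / x) (-I * y / x ^ 2) := by
  simpa only [neg_div, neg_neg, mul_div_assoc] using (hy.neg_inv hx).neg

theorem neg_two_mul_mul_div_sq (hy : OnSquareTorusCurve x y) (hx : x ≠ 0) (a b : ℂ) :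
    -2 * a * b * x / y ^ 2 = -(a * b) / (2 * (x ^ 2 - 1)) := by
  rw [hy]
  rcases eq_or_ne (x ^ 2 - 1) 0 with h | h
  · -- both sides are divisions by zero
    rw [show 4 * x ^ 3 - 4 * x = 4 * x * (x ^ 2 - 1) by ring, h]
    simp
  · field_simp
    ring

end OnSquareTorusCurve

/-- Computation of C = Σ C_γ in the Klein bottle construction:
C = -2(r⁴ - 1)². -/
theorem klein_C (r r' : ℂ) (h0 : r ≠ 0) (h1 : r ≠ 1) (hm1 : r ≠ -1)
    (hr' : r' ^ 2 = 4 * r ^ 3 - 4 * r) :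
    let c₁ : Fin 4 → ℂ :=
      ![2*(r^2-1)^2, (r^2+1)*(r^2-3), (r^2+1)*(3*r^2-1), -2*(r^2-1)^2]
    let c₂ : Fin 4 → ℂ :=
      ![(r^2+1)*(3*r^2-1), -2*(r^2-1)^2, 2*(r^2-1)^2, (r^2+1)*(r^2-3)]
    let p : Fin 4 → ℂ := ![r, -1/r, -r, 1/r]
    let p' : Fin 4 → ℂ := ![r', r'/r^2, -Complex.I*r', -Complex.I*r'/r^2]
    let C : Fin 4 → ℂ := fun γ => -2 * (c₁ γ) * (c₂ γ) * p γ / (p' γ) ^ 2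
    C 0 + C 1 + C 2 + C 3 = -2 * (r ^ 4 - 1) ^ 2 := by
  intro c₁ c₂ p p' C
  have hr : OnSquareTorusCurve r r' := hr'
  have hr2 : 1 - r ^ 2 ≠ 0 := sub_ne_zero.2 (sq_ne_one_iff.2 ⟨h1, hm1⟩).symm
  have hinv : 1 / r ≠ 0 := one_div_ne_zero h0
  simp only [C, c₁, c₂, p, p', Matrix.cons_val_zero, Matrix.cons_val_one, Matrix.cons_val_two,
    Matrix.cons_val_three, Matrix.head_cons, Matrix.tail_cons]
  rw [hr.neg_two_mul_mul_div_sq h0, (hr.neg_inv h0).neg_two_mul_mul_div_sq (by simpa using hinv),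
    hr.neg.neg_two_mul_mul_div_sq (neg_ne_zero.2 h0), (hr.inv h0).neg_two_mul_mul_div_sq hinv]
  field_simp
  ring
end
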